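/- Closed form with arbitrary PSD initial term: let X₀ = ΓᵀΓ and X_{t+1} = CᵀC + AᵀX_t(I + BBᵀX_t)⁻¹A. With V_t, T_t as in the zero-initial closed form and Υ_t = [A^{t−1}B, …, AB, B], one has X_t = [V_t; ΓA^t]ᵀ (I + [T_t; ΓΥ_t][T_t; ΓΥ_t]ᵀ)⁻¹ [V_t; ΓA^t] for all t ≥ 1. -/

import Mathlib

open Matrix

/-- `V t = [C; CA; …; CA^{t-1}]`, with block row index `Fin t`. -/
def obsMat {n l : ℕ} (A : Matrix (Fin n) (Fin n) ℝ) (C : Matrix (Fin l) (Fin n) ℝ)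
    (t : ℕ) : Matrix (Fin t × Fin l) (Fin n) ℝ :=
  fun a j => (C * A ^ (a.1 : ℕ)) a.2 j

/-- `T t`: block lower-triangular Toeplitz matrix with zero diagonal blocks and
subdiagonal blocks `CB, CAB, …, CA^{t-2}B`. -/
def toepMat {n m l : ℕ} (A : Matrix (Fin n) (Fin n) ℝ) (B : Matrix (Fin n) (Fin m) ℝ)
    (C : Matrix (Fin l) (Fin n) ℝ) (t : ℕ) :
    Matrix (Fin t × Fin l) (Fin t × Fin m) ℝ :=
  fun a b =>
    if (b.1 : ℕ) < (a.1 : ℕ) then (C * A ^ ((a.1 : ℕ) - (b.1 : ℕ) - 1) * B) a.2 b.2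
    else 0

/-- `Υ t = [A^{t-1}B, …, AB, B]`, with block column index `Fin t`. -/
def ctrbMat {n m : ℕ} (A : Matrix (Fin n) (Fin n) ℝ) (B : Matrix (Fin n) (Fin m) ℝ)
    (t : ℕ) : Matrix (Fin n) (Fin t × Fin m) ℝ :=
  fun i b => (A ^ (t - 1 - (b.1 : ℕ)) * B) i b.2

/-!
Write the closed form as `riccatiForm M N = Mᵀ (1 + N Nᵀ)⁻¹ M`. By the push-through identity
`X (1 + B Bᵀ X)⁻¹ = Mᵀ (1 + N Nᵀ + M B Bᵀ Mᵀ)⁻¹ M` for `X = riccatiForm M N`, one Riccati step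
sends `riccatiForm M N` to `riccatiForm [C; M A] [[0, 0], [M B, N]]`. For `M = [V_t; Γ A^t]` and
`N = [T_t; Γ Υ_t]` these are `[V_{t+1}; Γ A^{t+1}]` and `[T_{t+1}; Γ Υ_{t+1}]` up to moving the
first block row and column, which does not change the form. At `t = 0`, `N` has no columns and
`riccatiForm M N = Γᵀ Γ`.
-/

section PushThrough

variable {R : Type*} [CommRing R] {n p : Type*} [Fintype n] [Fintype p] [DecidableEq n]
  [DecidableEq p]

theorem Matrix.mul_inv_mul_mul_inv_one_add_mul (U : Matrix n p R) (V : Matrix p n R)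
    (P : Matrix p p R) (K : Matrix n n R) (hP : IsUnit P.det)
    (hPK : IsUnit (P + V * K * U).det) :
    U * P⁻¹ * V * (1 + K * (U * P⁻¹ * V))⁻¹ = U * (P + V * K * U)⁻¹ * V := by
  have hV_factor : V + V * K * U * (P⁻¹ * V) = (P + V * K * U) * (P⁻¹ * V) := by
    rw [Matrix.add_mul, mul_nonsing_inv_cancel_left _ _ hP]
  have hcomm : K * (U * P⁻¹ * V) = K * U * P⁻¹ * V := by simp only [Matrix.mul_assoc]
  have hI_factor : 1 + V * (K * U * P⁻¹) = (P + V * K * U) * P⁻¹ := by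
    rw [Matrix.add_mul, mul_nonsing_inv _ hP]
    simp only [Matrix.mul_assoc]
  have hD : IsUnit (1 + K * (U * P⁻¹ * V)).det := by
    rw [hcomm, det_one_add_mul_comm, hI_factor, det_mul]
    exact hPK.mul (isUnit_nonsing_inv_det _ hP)
  have key : U * (P + V * K * U)⁻¹ * V * (1 + K * (U * P⁻¹ * V)) = U * P⁻¹ * V := by
    calc U * (P + V * K * U)⁻¹ * V * (1 + K * (U * P⁻¹ * V))
        = U * (P + V * K * U)⁻¹ * (V + V * K * U * (P⁻¹ * V)) := by
          simp only [Matrix.mul_add, Matrix.mul_one, Matrix.mul_assoc]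
      _ = U * ((P + V * K * U)⁻¹ * ((P + V * K * U) * (P⁻¹ * V))) := by
          rw [hV_factor, Matrix.mul_assoc]
      _ = U * P⁻¹ * V := by rw [nonsing_inv_mul_cancel_left _ _ hPK, Matrix.mul_assoc]
  calc U * P⁻¹ * V * (1 + K * (U * P⁻¹ * V))⁻¹
      = U * (P + V * K * U)⁻¹ * V * (1 + K * (U * P⁻¹ * V)) * (1 + K * (U * P⁻¹ * V))⁻¹ := by
        rw [key]
    _ = U * (P + V * K * U)⁻¹ * V := mul_nonsing_inv_cancel_right _ _ hD

end PushThrough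

section RiccatiForm

variable {k p q : Type*} [Fintype p] [Fintype q] [DecidableEq p]

noncomputable def riccatiForm (M : Matrix p k ℝ) (N : Matrix p q ℝ) : Matrix k k ℝ :=
  Mᵀ * (1 + N * Nᵀ)⁻¹ * M

theorem posDef_one_add_mul_transpose_self (N : Matrix p q ℝ) : (1 + N * Nᵀ).PosDef := by
  refine PosDef.one.add_posSemidef ?_
  simpa only [conjTranspose_eq_transpose_of_trivial] using posSemidef_self_mul_conjTranspose N

theorem isUnit_det_one_add_mul_transpose_self (N : Matrix p q ℝ) : IsUnit (1 + N * Nᵀ).det :=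
  (posDef_one_add_mul_transpose_self N).det_pos.ne'.isUnit

theorem riccatiForm_submatrix {p' q' : Type*} [Fintype p'] [Fintype q'] [DecidableEq p']
    (M : Matrix p k ℝ) (N : Matrix p q ℝ) (e : p' ≃ p) (f : q' ≃ q) :
    riccatiForm (M.submatrix e id) (N.submatrix e f) = riccatiForm M N := by
  rw [riccatiForm, transpose_submatrix, transpose_submatrix, submatrix_mul_equiv _ _ _ f,
    ← submatrix_one_equiv e, show _ + _ = (1 + N * Nᵀ).submatrix e e from rfl,
    inv_submatrix_equiv, submatrix_mul_equiv, submatrix_mul_equiv, submatrix_id_id, riccatiForm]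

theorem riccatiForm_fromRows_fromBlocks {l m : Type*} [Fintype l] [Fintype m]
    [DecidableEq l] (C : Matrix l k ℝ) (Y : Matrix p k ℝ) (W : Matrix p m ℝ) (N : Matrix p q ℝ) :
    riccatiForm (fromRows C Y) (fromBlocks (0 : Matrix l m ℝ) 0 W N) =
      Cᵀ * C + riccatiForm Y (fromCols W N) := by
  have hblock :
      1 + fromBlocks (0 : Matrix l m ℝ) 0 W N * (fromBlocks (0 : Matrix l m ℝ) 0 W N)ᵀ =
        fromBlocks 1 0 0 (1 + fromCols W N * (fromCols W N)ᵀ) := by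
    rw [fromBlocks_transpose, fromBlocks_multiply, ← fromBlocks_one, fromBlocks_add,
      transpose_fromCols, fromCols_mul_fromRows]
    simp
  have hinv := inv_fromBlocks_zero₁₂_of_isUnit_iff (1 : Matrix l l ℝ) 0
    (1 + fromCols W N * (fromCols W N)ᵀ)
    (iff_of_true isUnit_one
      ((isUnit_iff_isUnit_det _).mpr (isUnit_det_one_add_mul_transpose_self _)))
  rw [riccatiForm, hblock, hinv, transpose_fromRows, fromCols_mul_fromBlocks,
    fromCols_mul_fromRows]
  simp [riccatiForm]

theorem riccatiForm_mul_fromCols_mul {n m : Type*} [Fintype n] [DecidableEq n] [Fintype m]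
    (A : Matrix n n ℝ) (B : Matrix n m ℝ) (M : Matrix p n ℝ) (N : Matrix p q ℝ) :
    riccatiForm (M * A) (fromCols (M * B) N) =
      Aᵀ * riccatiForm M N * (1 + B * Bᵀ * riccatiForm M N)⁻¹ * A := by
  have hsum :
      1 + fromCols (M * B) N * (fromCols (M * B) N)ᵀ = 1 + N * Nᵀ + M * (B * Bᵀ) * Mᵀ := by
    rw [transpose_fromCols, fromCols_mul_fromRows, transpose_mul]
    simp only [Matrix.mul_assoc]
    abel
  have hpush := Matrix.mul_inv_mul_mul_inv_one_add_mul Mᵀ M (1 + N * Nᵀ) (B * Bᵀ)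
    (isUnit_det_one_add_mul_transpose_self N) (hsum ▸ isUnit_det_one_add_mul_transpose_self _)
  rw [riccatiForm, riccatiForm, hsum, transpose_mul, Matrix.mul_assoc Aᵀ (Mᵀ * _ * M), hpush]
  simp only [Matrix.mul_assoc]

end RiccatiForm

def finSuccProdEquiv (t : ℕ) (α : Type*) : Fin (t + 1) × α ≃ α ⊕ Fin t × α :=
  ((finSuccEquiv t).prodCongr (Equiv.refl α)).trans optionProdEquiv

@[simp] theorem finSuccProdEquiv_zero (t : ℕ) {α : Type*} (a : α) :
    finSuccProdEquiv t α (0, a) = Sum.inl a := by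
  simp [finSuccProdEquiv]

@[simp] theorem finSuccProdEquiv_succ (t : ℕ) {α : Type*} (i : Fin t) (a : α) :
    finSuccProdEquiv t α (i.succ, a) = Sum.inr (i, a) := by
  simp [finSuccProdEquiv]

section SystemMatrices

variable {n m l : ℕ} (A : Matrix (Fin n) (Fin n) ℝ) (B : Matrix (Fin n) (Fin m) ℝ)
  (C : Matrix (Fin l) (Fin n) ℝ) (t : ℕ)

theorem obsMat_succ :
    obsMat A C (t + 1) = (fromRows C (obsMat A C t * A)).submatrix (finSuccProdEquiv t _) id := by
  ext ⟨i, c⟩ j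
  induction i using Fin.cases with
  | zero => simp [obsMat]
  | succ i =>
    simp only [obsMat, submatrix_apply, finSuccProdEquiv_succ, fromRows_apply_inr, Fin.val_succ,
      id]
    rw [pow_succ, ← Matrix.mul_assoc]
    rfl

theorem ctrbMat_succ :
    ctrbMat A B (t + 1) =
      (fromCols (A ^ t * B) (ctrbMat A B t)).submatrix id (finSuccProdEquiv t _) := by
  ext i ⟨b, j⟩
  induction b using Fin.cases with
  | zero => simp [ctrbMat]
  | succ b => simp [ctrbMat, Nat.sub_sub, add_comm]

theorem toepMat_succ :
    toepMat A B C (t + 1) = (fromBlocks 0 0 (obsMat A C t * B) (toepMat A B C t)).submatrix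
      (finSuccProdEquiv t _) (finSuccProdEquiv t _) := by
  ext ⟨i, c⟩ ⟨b, j⟩
  induction i using Fin.cases with
  | zero => induction b using Fin.cases <;> simp [toepMat]
  | succ i =>
    induction b using Fin.cases with
    | zero => simp [toepMat, obsMat, Matrix.mul_apply]
    | succ b => simp [toepMat]

def finSuccProdSumEquiv (t : ℕ) (α β : Type*) : Fin (t + 1) × α ⊕ β ≃ α ⊕ (Fin t × α ⊕ β) :=
  ((finSuccProdEquiv t α).sumCongr (Equiv.refl β)).trans (Equiv.sumAssoc _ _ _)

variable {r : ℕ} (Γ : Matrix (Fin r) (Fin n) ℝ)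

theorem fromRows_obsMat_succ :
    fromRows (obsMat A C (t + 1)) (Γ * A ^ (t + 1)) =
      (fromRows C (fromRows (obsMat A C t) (Γ * A ^ t) * A)).submatrix
        (finSuccProdSumEquiv t _ _) id := by
  ext (⟨i, c⟩ | k) j
  · rw [obsMat_succ]
    induction i using Fin.cases <;> simp [finSuccProdSumEquiv]
  · simp [finSuccProdSumEquiv, pow_succ, Matrix.mul_assoc]

theorem fromRows_toepMat_succ :
    fromRows (toepMat A B C (t + 1)) (Γ * ctrbMat A B (t + 1)) =
      (fromBlocks 0 0 (fromRows (obsMat A C t) (Γ * A ^ t) * B)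
        (fromRows (toepMat A B C t) (Γ * ctrbMat A B t))).submatrix
        (finSuccProdSumEquiv t _ _) (finSuccProdEquiv t _) := by
  ext (⟨i, c⟩ | k) ⟨b, j⟩
  · rw [toepMat_succ]
    induction i using Fin.cases <;> induction b using Fin.cases <;> simp [finSuccProdSumEquiv]
  · rw [ctrbMat_succ]
    induction b using Fin.cases <;>
      simp [finSuccProdSumEquiv, Matrix.mul_apply, Matrix.mul_assoc]

end SystemMatrices

theorem stmt_11 {n m l r : ℕ}
    (A : Matrix (Fin n) (Fin n) ℝ) (B : Matrix (Fin n) (Fin m) ℝ)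
    (C : Matrix (Fin l) (Fin n) ℝ) (Γ : Matrix (Fin r) (Fin n) ℝ)
    (X : ℕ → Matrix (Fin n) (Fin n) ℝ)
    (hX0 : X 0 = Γᵀ * Γ)
    (hXrec : ∀ t, X (t + 1) = Cᵀ * C + Aᵀ * X t * (1 + B * Bᵀ * X t)⁻¹ * A) :
    ∀ t, 1 ≤ t →
      X t = (fromRows (obsMat A C t) (Γ * A ^ t))ᵀ *
        (1 + (fromRows (toepMat A B C t) (Γ * ctrbMat A B t)) *
          (fromRows (toepMat A B C t) (Γ * ctrbMat A B t))ᵀ)⁻¹ *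
        fromRows (obsMat A C t) (Γ * A ^ t) := by
  suffices closedForm : ∀ t, X t = riccatiForm (fromRows (obsMat A C t) (Γ * A ^ t))
      (fromRows (toepMat A B C t) (Γ * ctrbMat A B t)) from fun t _ => closedForm t
  intro t
  induction t with
  | zero =>
    rw [hX0, riccatiForm, Subsingleton.elim (fromRows (toepMat A B C 0) (Γ * ctrbMat A B 0)) 0,
      Subsingleton.elim (obsMat A C 0) 0]
    simp [transpose_fromRows, fromCols_mul_fromRows]
  | succ t ih =>
    rw [hXrec, ih, ← riccatiForm_mul_fromCols_mul, ← riccatiForm_fromRows_fromBlocks,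
      fromRows_obsMat_succ, fromRows_toepMat_succ, riccatiForm_submatrix]
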